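/- arXiv:1707.06769 — 7 statements merged into one kernel-verified Lean document; each statement's English description precedes it below -/
import Mathlib

section
/- For s ∈ (0,1), s ≠ 1/2, and an integer k ≥ 2, the double integral ∫_{-1}^{1} ∫_{-1}^{1} (1-|x|)(1-|y|)/|x-y-k|^{1+2s} dx dy equals (4(k+1)^{3-2s} + 4(k-1)^{3-2s} - 6k^{3-2s} - (k+2)^{3-2s} - (k-2)^{3-2s}) / (4s(1-2s)(1-s)(3-2s)). -/
/-!
If `F'' = f` on `[c - 1, c + 1]`, integrating by parts against the tent `1 - |x|` gives
`∫₋₁¹ (1 - |x|) f (c + x) dx = F (c + 1) + F (c - 1) - 2 F c`, a second difference of `F`.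
Since `x - y - k < 0` on the square, the inner integral is such a second difference of
`t ↦ t ^ (1 - 2s) / (-2s (1 - 2s))` taken at `t = k + y`, and integrating it once more against the
tent in `y` gives the fourth difference of `t ↦ t ^ (3 - 2s) / (-2s (1 - 2s) (2 - 2s) (3 - 2s))`
at `k`, with coefficients `1, -4, 6, -4, 1`.
-/

open Real MeasureTheory Set intervalIntegral

lemma IntervalIntegrable.tent_mul_comp_add {f : ℝ → ℝ} {c : ℝ}
    (hf : IntervalIntegrable f volume (c - 1) (c + 1)) :
    IntervalIntegrable (fun x => (1 - |x|) * f (c + x)) volume (-1) 1 := by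
  have h := hf.comp_add_left c
  simp only [sub_sub_cancel_left, add_sub_cancel_left] at h
  exact h.continuousOn_mul (by fun_prop)

section Tent

variable {F F' f : ℝ → ℝ} {c : ℝ}

lemma integral_zero_one_tent_mul_comp_add
    (hF : ContinuousOn F (Icc (c - 1) (c + 1))) (hF' : ContinuousOn F' (Icc (c - 1) (c + 1)))
    (hFd : ∀ t ∈ Ioo (c - 1) (c + 1), HasDerivAt F (F' t) t)
    (hF'd : ∀ t ∈ Ioo (c - 1) (c + 1), HasDerivAt F' (f t) t)
    (hf : IntervalIntegrable f volume (c - 1) (c + 1)) :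
    ∫ x in (0:ℝ)..1, (1 - |x|) * f (c + x) = F (c + 1) - F c - F' c := by
  have hmaps : MapsTo (c + ·) (Icc (0:ℝ) 1) (Icc (c - 1) (c + 1)) :=
    fun x hx => ⟨by linarith [hx.1], by linarith [hx.2]⟩
  have hcont : ContinuousOn (fun x => (1 - x) * F' (c + x) + F (c + x)) (Icc 0 1) :=
    ((continuousOn_const.sub continuousOn_id).mul (hF'.comp (by fun_prop) hmaps)).add
      (hF.comp (by fun_prop) hmaps)
  have hderiv : ∀ x ∈ Ioo (0:ℝ) 1, HasDerivAt (fun x => (1 - x) * F' (c + x) + F (c + x))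
      ((1 - |x|) * f (c + x)) x := by
    intro x hx
    have ht : c + x ∈ Ioo (c - 1) (c + 1) := ⟨by linarith [hx.1], by linarith [hx.2]⟩
    refine ((((hasDerivAt_id x).const_sub 1).mul ((hF'd _ ht).comp_const_add c x)).add
      ((hFd _ ht).comp_const_add c x)).congr_deriv ?_
    rw [abs_of_pos hx.1, id]
    ring
  have hint := hf.tent_mul_comp_add.mono_set (uIcc_subset_uIcc_right (x := 0) (by norm_num))
  rw [integral_eq_sub_of_hasDerivAt_of_le zero_le_one hcont hderiv hint]
  norm_num
  ring

lemma integral_neg_one_zero_tent_mul_comp_add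
    (hF : ContinuousOn F (Icc (c - 1) (c + 1))) (hF' : ContinuousOn F' (Icc (c - 1) (c + 1)))
    (hFd : ∀ t ∈ Ioo (c - 1) (c + 1), HasDerivAt F (F' t) t)
    (hF'd : ∀ t ∈ Ioo (c - 1) (c + 1), HasDerivAt F' (f t) t)
    (hf : IntervalIntegrable f volume (c - 1) (c + 1)) :
    ∫ x in (-1:ℝ)..0, (1 - |x|) * f (c + x) = F (c - 1) - F c + F' c := by
  have hmaps : MapsTo (c + ·) (Icc (-1:ℝ) 0) (Icc (c - 1) (c + 1)) :=
    fun x hx => ⟨by linarith [hx.1], by linarith [hx.2]⟩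
  have hcont : ContinuousOn (fun x => (1 + x) * F' (c + x) - F (c + x)) (Icc (-1) 0) :=
    ((continuousOn_const.add continuousOn_id).mul (hF'.comp (by fun_prop) hmaps)).sub
      (hF.comp (by fun_prop) hmaps)
  have hderiv : ∀ x ∈ Ioo (-1:ℝ) 0, HasDerivAt (fun x => (1 + x) * F' (c + x) - F (c + x))
      ((1 - |x|) * f (c + x)) x := by
    intro x hx
    have ht : c + x ∈ Ioo (c - 1) (c + 1) := ⟨by linarith [hx.1], by linarith [hx.2]⟩
    refine ((((hasDerivAt_id x).const_add 1).mul ((hF'd _ ht).comp_const_add c x)).sub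
      ((hFd _ ht).comp_const_add c x)).congr_deriv ?_
    rw [abs_of_neg hx.2, id]
    ring
  have hint := hf.tent_mul_comp_add.mono_set (uIcc_subset_uIcc_left (x := 0) (by norm_num))
  rw [integral_eq_sub_of_hasDerivAt_of_le (by norm_num) hcont hderiv hint]
  norm_num [sub_eq_add_neg]
  ring

lemma integral_tent_mul_comp_add
    (hF : ContinuousOn F (Icc (c - 1) (c + 1))) (hF' : ContinuousOn F' (Icc (c - 1) (c + 1)))
    (hFd : ∀ t ∈ Ioo (c - 1) (c + 1), HasDerivAt F (F' t) t)
    (hF'd : ∀ t ∈ Ioo (c - 1) (c + 1), HasDerivAt F' (f t) t)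
    (hf : IntervalIntegrable f volume (c - 1) (c + 1)) :
    ∫ x in (-1:ℝ)..1, (1 - |x|) * f (c + x) = F (c + 1) + F (c - 1) - 2 * F c := by
  have hint := hf.tent_mul_comp_add
  rw [← integral_add_adjacent_intervals
      (hint.mono_set (uIcc_subset_uIcc_left (x := 0) (by norm_num)))
      (hint.mono_set (uIcc_subset_uIcc_right (x := 0) (by norm_num))),
    integral_neg_one_zero_tent_mul_comp_add hF hF' hFd hF'd hf,
    integral_zero_one_tent_mul_comp_add hF hF' hFd hF'd hf]
  ring

end Tent

lemma integral_tent_mul_add_rpow {c r : ℝ} (hc : 1 ≤ c) (hr₁ : r + 1 ≠ 0) (hr₂ : r + 2 ≠ 0)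
    (h : 1 < c ∨ -1 < r) :
    ∫ x in (-1:ℝ)..1, (1 - |x|) * (c + x) ^ r
      = ((c + 1) ^ (r + 2) + (c - 1) ^ (r + 2) - 2 * c ^ (r + 2)) / ((r + 1) * (r + 2)) := by
  have hcont : ∀ q, r + 1 ≤ q → ContinuousOn (fun t : ℝ => t ^ q) (Icc (c - 1) (c + 1)) :=
    fun q hq => continuousOn_id.rpow_const fun t ht => by
      rcases h with h | h
      · exact Or.inl (show t ≠ 0 by linarith [ht.1])
      · exact Or.inr (by linarith)
  have hderiv : ∀ q, q ≠ 0 → ∀ t ∈ Ioo (c - 1) (c + 1),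
      HasDerivAt (fun t : ℝ => t ^ q / q) (t ^ (q - 1)) t := fun q hq t ht =>
    ((hasDerivAt_rpow_const (Or.inl (by linarith [ht.1]))).div_const q).congr_deriv
      (mul_div_cancel_left₀ _ hq)
  have hf : IntervalIntegrable (fun t : ℝ => t ^ r) volume (c - 1) (c + 1) := by
    rcases h with h | h
    · refine (continuousOn_id.rpow_const fun t ht => Or.inl ?_).intervalIntegrable
      rw [uIcc_of_le (by linarith)] at ht
      exact show t ≠ 0 by linarith [ht.1]
    · exact intervalIntegrable_rpow' h
  have := integral_tent_mul_comp_add (F := fun t => t ^ (r + 2) / (r + 2) / (r + 1))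
    (F' := fun t => t ^ (r + 1) / (r + 1)) ((hcont _ (by linarith)).div_const _ |>.div_const _)
    ((hcont _ le_rfl).div_const _)
    (fun t ht => by
      simpa only [add_sub_assoc, show (2:ℝ) - 1 = 1 by norm_num] using
        (hderiv _ hr₂ t ht).div_const (r + 1))
    (fun t ht => by simpa only [add_sub_cancel_right] using hderiv _ hr₁ t ht) hf
  rw [this]
  field_simp

lemma integral_tent_div_abs_sub_rpow {c p : ℝ} (hc : 1 < c) (hp₁ : p ≠ 1) (hp₂ : p ≠ 2) :
    ∫ x in (-1:ℝ)..1, (1 - |x|) / |x - c| ^ p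
      = ((c + 1) ^ (2 - p) + (c - 1) ^ (2 - p) - 2 * c ^ (2 - p)) / ((1 - p) * (2 - p)) := by
  have hreflect : ∫ x in (-1:ℝ)..1, (1 - |x|) / |x - c| ^ p
      = ∫ x in (-1:ℝ)..1, (1 - |x|) * (c + x) ^ (-p) := by
    rw [← neg_neg (1:ℝ), ← integral_comp_neg, neg_neg]
    refine integral_congr fun x hx => ?_
    rw [uIcc_of_le (by norm_num)] at hx
    have hpos : 0 < c + x := by linarith [hx.1]
    simp only [abs_neg]
    rw [show -x - c = -(c + x) by ring, abs_neg, abs_of_pos hpos, rpow_neg hpos.le, div_eq_mul_inv]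
  rw [hreflect, integral_tent_mul_add_rpow hc.le (by contrapose! hp₁; linarith)
    (by contrapose! hp₂; linarith) (Or.inl hc)]
  ring_nf

theorem stmt_0 (s : ℝ) (hs : s ∈ Set.Ioo (0:ℝ) 1) (hs2 : s ≠ 1/2)
    (k : ℤ) (hk : 2 ≤ k) :
    (∫ y in (-1:ℝ)..1, ∫ x in (-1:ℝ)..1,
        (1 - |x|) * (1 - |y|) / |x - y - (k:ℝ)| ^ (1 + 2*s))
      = (4*((k:ℝ)+1)^(3-2*s) + 4*((k:ℝ)-1)^(3-2*s) - 6*(k:ℝ)^(3-2*s)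
          - ((k:ℝ)+2)^(3-2*s) - ((k:ℝ)-2)^(3-2*s))
        / (4*s*(1-2*s)*(1-s)*(3-2*s)) := by
  obtain ⟨hs0, hs1⟩ := hs
  have hk2 : (2:ℝ) ≤ k := by exact_mod_cast hk
  have hinner : ∀ y ∈ uIoc (-1:ℝ) 1,
      ∫ x in (-1:ℝ)..1, (1 - |x|) * (1 - |y|) / |x - y - (k:ℝ)| ^ (1 + 2*s)
        = ((1 - |y|) * ((k + 1) + y) ^ (1 - 2*s) + (1 - |y|) * ((k - 1) + y) ^ (1 - 2*s)
            - 2 * ((1 - |y|) * (k + y) ^ (1 - 2*s))) / (-(2*s) * (1 - 2*s)) := by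
    intro y hy
    rw [uIoc_of_le (by norm_num)] at hy
    simp_rw [mul_div_right_comm _ (1 - |y|), sub_right_comm _ y, sub_sub]
    rw [intervalIntegral.integral_mul_const, integral_tent_div_abs_sub_rpow (by linarith [hy.1])
      (by intro h; linarith) (fun h => hs2 (by linarith)), add_right_comm (k:ℝ) y,
      add_sub_right_comm (k:ℝ) y, show 2 - (1 + 2*s) = 1 - 2*s by ring,
      show 1 - (1 + 2*s) = -(2*s) by ring]
    ring
  have hr : -1 < 1 - 2*s := by linarith
  have hint : ∀ c, IntervalIntegrable (fun y => (1 - |y|) * (c + y) ^ (1 - 2*s)) volume (-1) 1 :=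
    fun c => (intervalIntegrable_rpow' hr).tent_mul_comp_add
  have hrpow : ∀ c, 1 ≤ c → ∫ y in (-1:ℝ)..1, (1 - |y|) * (c + y) ^ (1 - 2*s)
      = ((c + 1) ^ (3 - 2*s) + (c - 1) ^ (3 - 2*s) - 2 * c ^ (3 - 2*s)) / ((2 - 2*s) * (3 - 2*s)) :=
    fun c hc => by
      rw [integral_tent_mul_add_rpow hc (by linarith) (by linarith) (Or.inr hr)]
      ring_nf
  rw [intervalIntegral.integral_congr_ae (ae_of_all _ hinner), intervalIntegral.integral_div,
    intervalIntegral.integral_sub ((hint _).add (hint _)) ((hint _).const_mul 2),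
    intervalIntegral.integral_add (hint _) (hint _), intervalIntegral.integral_const_mul,
    hrpow _ (by linarith), hrpow _ (by linarith), hrpow _ (by linarith)]
  rw [show (k:ℝ) + 1 + 1 = k + 2 by ring, add_sub_cancel_right, sub_add_cancel,
    show (k:ℝ) - 1 - 1 = k - 2 by ring]
  have : 1 - s ≠ 0 := by linarith
  have : 1 - 2*s ≠ 0 := fun h => hs2 (by linarith)
  have : 3 - 2*s ≠ 0 := by linarith
  field_simp
  ring
end

section
/- The double integral 2∫_{-1}^{1} ∫_{-1}^{1} (1-|x|)(1-|y|)/(2+y-x)^{2} dx dy equals 36 ln 3 - 56 ln 2. -/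
/-!
The hat function `1 - |x|` is the Green kernel of the second difference: for `g` twice
differentiable on `(-1, 1)`, `∫_{-1}^{1} (1 - |x|) g''(x) dx = g(-1) - 2 g(0) + g(1)`, since on each
half the hat is affine and `(1 ± x) g' ∓ g` is an antiderivative. The inner kernel `(2 + y - x)⁻²`
is the `x`-second derivative of `-log (2 + y - x)`, so the inner integral is
`-(1 - |y|) Δ² log (2 + y)`. Since `log` is the second derivative of `t² / 2 log t - 3 t² / 4`,
applying the identity once more expresses the double integral through values of `t² log t` at
`t = 0, …, 4`.
-/

open Real Set MeasureTheory intervalIntegral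

def secondDiff (f : ℝ → ℝ) (a : ℝ) : ℝ := f (a - 1) - 2 * f a + f (a + 1)

lemma HasDerivAt.secondDiff {f f' : ℝ → ℝ} {a : ℝ}
    (hf : ∀ t ∈ ({a - 1, a, a + 1} : Set ℝ), HasDerivAt f (f' t) t) :
    HasDerivAt (secondDiff f) (secondDiff f' a) a := by
  have h₁ := (hf (a - 1) (by simp)).comp_sub_const a 1
  have h₂ := hf a (by simp)
  have h₃ := (hf (a + 1) (by simp)).comp_add_const a 1
  exact (h₁.sub (h₂.const_mul 2)).add h₃

lemma Continuous.secondDiff {f : ℝ → ℝ} (hf : Continuous f) : Continuous (secondDiff f) := by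
  unfold _root_.secondDiff
  fun_prop

lemma IntervalIntegrable.secondDiff {f : ℝ → ℝ} (hf : ∀ a b, IntervalIntegrable f volume a b)
    (a b : ℝ) : IntervalIntegrable (secondDiff f) volume a b := by
  have shift (c : ℝ) : IntervalIntegrable (fun x => f (x + c)) volume a b := by
    simpa using (hf (a + c) (b + c)).comp_add_right c
  refine ((shift (-1)).sub ((hf a b).const_mul 2)).add (shift 1) |>.congr fun x _ => ?_
  simp [_root_.secondDiff, sub_eq_add_neg]

theorem integral_hat_mul_eq_secondDiff {g g' g'' : ℝ → ℝ}
    (hg : ContinuousOn g (Icc (-1) 1)) (hg' : ContinuousOn g' (Icc (-1) 1))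
    (hderiv : ∀ x ∈ Ioo (-1 : ℝ) 1, HasDerivAt g (g' x) x)
    (hderiv' : ∀ x ∈ Ioo (-1 : ℝ) 1, HasDerivAt g' (g'' x) x)
    (hint : IntervalIntegrable (fun x => (1 - |x|) * g'' x) volume (-1) 1) :
    ∫ x in (-1 : ℝ)..1, (1 - |x|) * g'' x = secondDiff g 0 := by
  have hint₁ : IntervalIntegrable (fun x => (1 - |x|) * g'' x) volume (-1) 0 :=
    hint.mono_set (uIcc_subset_uIcc (by simp) (by simp))
  have hint₂ : IntervalIntegrable (fun x => (1 - |x|) * g'' x) volume 0 1 :=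
    hint.mono_set (uIcc_subset_uIcc (by simp) (by simp))
  have left : ∫ x in (-1 : ℝ)..0, (1 - |x|) * g'' x = g' 0 - g 0 + g (-1) := by
    have := integral_eq_sub_of_hasDerivAt_of_le (f := fun x => (1 + x) * g' x - g x)
      (by norm_num) (((continuousOn_const.add continuousOn_id).mul hg').sub hg |>.mono
        (Icc_subset_Icc le_rfl (by norm_num)))
      (fun x hx => by
        have hx' : x ∈ Ioo (-1 : ℝ) 1 := ⟨hx.1, hx.2.trans (by norm_num)⟩
        refine ((((hasDerivAt_id x).const_add 1).mul (hderiv' x hx')).sub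
          (hderiv x hx')).congr_deriv ?_
        rw [abs_of_neg hx.2]
        simp) hint₁
    simpa using this
  have right : ∫ x in (0 : ℝ)..1, (1 - |x|) * g'' x = g 1 - (g' 0 + g 0) := by
    have := integral_eq_sub_of_hasDerivAt_of_le (f := fun x => (1 - x) * g' x + g x)
      (by norm_num) (((continuousOn_const.sub continuousOn_id).mul hg').add hg |>.mono
        (Icc_subset_Icc (by norm_num) le_rfl))
      (fun x hx => by
        have hx' : x ∈ Ioo (-1 : ℝ) 1 := ⟨(by norm_num : (-1 : ℝ) < 0).trans hx.1, hx.2⟩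
        refine ((((hasDerivAt_id x).const_sub 1).mul (hderiv' x hx')).add
          (hderiv x hx')).congr_deriv ?_
        rw [abs_of_pos hx.1]
        simp) hint₂
    simpa using this
  rw [← integral_add_adjacent_intervals hint₁ hint₂, left, right, secondDiff, zero_sub, zero_add]
  ring

theorem integral_hat_div_sq {a : ℝ} (ha : 1 < a) :
    ∫ x in (-1 : ℝ)..1, (1 - |x|) / (a - x) ^ 2 = -secondDiff log a := by
  have hpos : ∀ x ∈ Icc (-1 : ℝ) 1, a - x ≠ 0 := fun x hx => by linarith [hx.2]
  have hlog : ∀ x ∈ Icc (-1 : ℝ) 1, HasDerivAt (fun x => -log (a - x)) (a - x)⁻¹ x :=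
    fun x hx => (((hasDerivAt_id x).const_sub a).log (hpos x hx)).neg.congr_deriv (by
      simp [neg_div])
  have hinv : ∀ x ∈ Icc (-1 : ℝ) 1, HasDerivAt (fun x => (a - x)⁻¹) ((a - x) ^ 2)⁻¹ x :=
    fun x hx => (((hasDerivAt_id x).const_sub a).inv (hpos x hx)).congr_deriv (by simp)
  simp_rw [div_eq_mul_inv]
  rw [integral_hat_mul_eq_secondDiff
    (fun x hx => (hlog x hx).continuousAt.continuousWithinAt)
    (fun x hx => (hinv x hx).continuousAt.continuousWithinAt)
    (fun x hx => hlog x (Ioo_subset_Icc_self hx)) (fun x hx => hinv x (Ioo_subset_Icc_self hx))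
    (ContinuousOn.intervalIntegrable (by
      rw [uIcc_of_le (by norm_num)]
      exact (continuousOn_const.sub continuous_abs.continuousOn).mul
        (((continuousOn_const.sub continuousOn_id).pow 2).inv₀ fun x hx =>
          pow_ne_zero 2 (hpos x hx))))]
  simp only [secondDiff]
  ring_nf

noncomputable def logPrimitive (t : ℝ) : ℝ := t * log t - t

noncomputable def logPrimitive₂ (t : ℝ) : ℝ := t ^ 2 / 2 * log t - 3 * t ^ 2 / 4

lemma continuous_logPrimitive : Continuous logPrimitive :=
  continuous_mul_log.sub continuous_id

lemma continuous_logPrimitive₂ : Continuous logPrimitive₂ := by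
  have : logPrimitive₂ = fun t => t / 2 * (t * log t) - 3 * t ^ 2 / 4 := by
    ext t
    simp only [logPrimitive₂]
    ring
  rw [this]
  exact ((continuous_id.div_const 2).mul continuous_mul_log).sub (by fun_prop)

lemma hasDerivAt_logPrimitive {t : ℝ} (ht : t ≠ 0) : HasDerivAt logPrimitive (log t) t :=
  (((hasDerivAt_id t).mul (hasDerivAt_log ht)).sub (hasDerivAt_id t)).congr_deriv (by
    field_simp
    simp)

lemma hasDerivAt_logPrimitive₂ {t : ℝ} (ht : t ≠ 0) :
    HasDerivAt logPrimitive₂ (logPrimitive t) t := by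
  have hsq := hasDerivAt_pow 2 t
  refine (((hsq.div_const 2).mul (hasDerivAt_log ht)).sub
    ((hsq.const_mul 3).div_const 4)).congr_deriv ?_
  simp only [logPrimitive]
  field_simp
  ring

theorem integral_hat_mul_secondDiff_log :
    ∫ y in (-1 : ℝ)..1, (1 - |y|) * -secondDiff log (2 + y)
      = -secondDiff (secondDiff logPrimitive₂) 2 := by
  have hderiv {F F' : ℝ → ℝ} (hF : ∀ t : ℝ, 0 < t → HasDerivAt F (F' t) t) :
      ∀ y ∈ Ioo (-1 : ℝ) 1,
        HasDerivAt (fun y => -secondDiff F (2 + y)) (-secondDiff F' (2 + y)) y :=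
    fun y hy => (HasDerivAt.secondDiff (fun t ht => hF t (by
      obtain rfl | rfl | rfl := ht <;> linarith [hy.1])) |>.comp_const_add 2 y).neg
  have hcont {F : ℝ → ℝ} (hF : Continuous F) :
      ContinuousOn (fun y => -secondDiff F (2 + y)) (Icc (-1) 1) :=
    (hF.secondDiff.comp (continuous_const_add 2)).neg.continuousOn
  have hint : IntervalIntegrable (fun y => -secondDiff log (2 + y)) volume (-1) 1 := by
    have h := (IntervalIntegrable.secondDiff (fun _ _ => intervalIntegrable_log') 1 3).comp_add_left 2
    norm_num at h
    exact h.neg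
  rw [integral_hat_mul_eq_secondDiff (hcont continuous_logPrimitive₂)
    (hcont continuous_logPrimitive) (hderiv fun t ht => hasDerivAt_logPrimitive₂ ht.ne')
    (hderiv fun t ht => hasDerivAt_logPrimitive ht.ne')
    (hint.continuousOn_mul (continuous_const.sub continuous_abs).continuousOn)]
  simp only [secondDiff]
  ring_nf

lemma secondDiff_secondDiff_logPrimitive₂_two :
    secondDiff (secondDiff logPrimitive₂) 2 = 28 * log 2 - 18 * log 3 := by
  have hlog4 : log 4 = 2 * log 2 := by
    rw [show (4 : ℝ) = 2 ^ 2 by norm_num, log_pow]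
    norm_num
  simp only [secondDiff, logPrimitive₂]
  norm_num [hlog4]
  ring

theorem stmt_2 :
    2 * (∫ y in (-1:ℝ)..1, ∫ x in (-1:ℝ)..1,
        (1 - |x|) * (1 - |y|) / (2 + y - x) ^ (2:ℕ))
      = 36 * Real.log 3 - 56 * Real.log 2 := by
  have hinner : ∀ y : ℝ, -1 < y → ∫ x in (-1:ℝ)..1, (1 - |x|) * (1 - |y|) / (2 + y - x) ^ 2
      = (1 - |y|) * -secondDiff log (2 + y) := fun y hy => by
    have hsplit : ∀ x : ℝ, (1 - |x|) * (1 - |y|) / (2 + y - x) ^ 2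
        = (1 - |y|) * ((1 - |x|) / (2 + y - x) ^ 2) := fun x => by ring
    simp_rw [hsplit, intervalIntegral.integral_const_mul, integral_hat_div_sq (a := 2 + y) (by linarith)]
  -- Integrating over `Ι (-1) 1 = Ioc (-1) 1` avoids `y = -1`, where the kernel is singular at `x = 1`.
  rw [integral_congr_ae (g := fun y => (1 - |y|) * -secondDiff log (2 + y))
      (Filter.Eventually.of_forall fun y hy => hinner y (by
        rw [uIoc_of_le (by norm_num)] at hy
        exact hy.1)),
    integral_hat_mul_secondDiff_log, secondDiff_secondDiff_logPrimitive₂_two]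
  ring
end

section
/- For s ∈ (0,1), s ≠ 1/2, the double integral -2∫_0^1 ∫_0^1 (1-x)(1-y)/(y-x+1)^{1+2s} dx dy equals (2^{1-2s} + s - 2)/(s(1-s)(3-2s)). -/
open Real

lemma inner_eq (s : ℝ) (hs0 : 0 < s) (hs1 : s < 1) (hs2 : s ≠ 1/2) {y : ℝ}
    (hy : 0 < y) (hy1 : y ≤ 1) :
    ∫ x in (0:ℝ)..1, (1 - x) * (1 - y) / (y - x + 1) ^ (1 + 2*s)
      = (-1/s) * (y+1) ^ (-(2*s)) + (2/(1-2*s) + 3/(2*s)) * (y+1) ^ (1-2*s)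
        + (-1/(1-2*s) - 1/(2*s)) * (y+1) ^ (2-2*s)
        + (-1/(2*s*(1-2*s))) * y ^ (1-2*s) + (1/(2*s*(1-2*s))) * y ^ (2-2*s) := by
  have h12 : 1 - 2*s ≠ 0 := by
    intro h; apply hs2; linarith [h]
  have hzpos : ∀ x ∈ Set.uIcc (0:ℝ) 1, 0 < y - x + 1 := by
    intro x hx
    rw [Set.uIcc_of_le (by norm_num)] at hx
    have := hx.2; linarith
  set G : ℝ → ℝ := fun x =>
    (1-y) * (-(y - x + 1) ^ (1-2*s) / (1-2*s) - y * (y - x + 1) ^ (-(2*s)) / (2*s)) with hG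
  have key : ∀ x ∈ Set.uIcc (0:ℝ) 1,
      HasDerivAt G ((1 - x) * (1 - y) / (y - x + 1) ^ (1 + 2*s)) x := by
    intro x hx
    have hz : 0 < y - x + 1 := hzpos x hx
    have hlin : HasDerivAt (fun x : ℝ => y - x + 1) (-1) x := by
      simpa using ((hasDerivAt_id x).const_sub y).add_const 1
    have h1 : HasDerivAt (fun x : ℝ => (y - x + 1) ^ (1-2*s))
        ((-1) * (1-2*s) * (y - x + 1) ^ (1-2*s-1)) x :=
      hlin.rpow_const (Or.inl hz.ne')
    have h2 : HasDerivAt (fun x : ℝ => (y - x + 1) ^ (-(2*s)))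
        ((-1) * (-(2*s)) * (y - x + 1) ^ (-(2*s)-1)) x :=
      hlin.rpow_const (Or.inl hz.ne')
    have h3 : HasDerivAt G
        ((1-y) * (-((-1) * (1-2*s) * (y - x + 1) ^ (1-2*s-1)) / (1-2*s)
          - y * ((-1) * (-(2*s)) * (y - x + 1) ^ (-(2*s)-1)) / (2*s))) x := by
      exact (((h1.neg.div_const (1-2*s)).sub
        ((h2.const_mul y).div_const (2*s))).const_mul (1-y))
    convert h3 using 1
    have e1 : (y - x + 1) ^ (1-2*s-1) = (y - x + 1) ^ (-(2*s)) * (y - x + 1) ^ (-(1:ℝ)) * (y - x + 1) := by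
      rw [← Real.rpow_add hz, ← Real.rpow_add_one hz.ne']; ring_nf
    have e2 : (y - x + 1) ^ (-(2*s)-1) = (y - x + 1) ^ (-(2*s)) * (y - x + 1) ^ (-(1:ℝ)) := by
      rw [← Real.rpow_add hz]; ring_nf
    have e3 : (y - x + 1) ^ (1+2*s) = ((y - x + 1) ^ (-(2*s)) * (y - x + 1) ^ (-(1:ℝ)))⁻¹ := by
      rw [← Real.rpow_add hz, ← Real.rpow_neg hz.le]; ring_nf
    have hP : (y - x + 1) ^ (-(2*s)) * (y - x + 1) ^ (-(1:ℝ)) ≠ 0 := by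
      positivity
    rw [e1, e2, e3]
    field_simp [h12, hs0.ne']
    ring
  have hcont : ContinuousOn (fun x => (1 - x) * (1 - y) / (y - x + 1) ^ (1 + 2*s))
      (Set.uIcc (0:ℝ) 1) := by
    apply ContinuousOn.div
    · fun_prop
    · exact ContinuousOn.rpow_const (by fun_prop) (fun x hx => Or.inl (hzpos x hx).ne')
    · intro x hx
      exact (Real.rpow_pos_of_pos (hzpos x hx) _).ne'
  rw [intervalIntegral.integral_eq_sub_of_hasDerivAt key hcont.intervalIntegrable]
  have hy' : y - 1 + 1 = y := by ring
  have hyy : y * y ^ (-(2*s)) = y ^ (1-2*s) := by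
    rw [show (1:ℝ)-2*s = -(2*s)+1 by ring, Real.rpow_add_one hy.ne']; ring
  have hyy2 : y * y ^ (1-2*s) = y ^ (2-2*s) := by
    rw [show (2:ℝ)-2*s = (1-2*s)+1 by ring, Real.rpow_add_one hy.ne']; ring
  have hp0 : (0:ℝ) < y + 1 := by linarith
  have hp1 : (y+1) * (y+1) ^ (-(2*s)) = (y+1) ^ (1-2*s) := by
    rw [show (1:ℝ)-2*s = -(2*s)+1 by ring, Real.rpow_add_one hp0.ne']; ring
  have hp2 : (y+1) * (y+1) ^ (1-2*s) = (y+1) ^ (2-2*s) := by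
    rw [show (2:ℝ)-2*s = (1-2*s)+1 by ring, Real.rpow_add_one hp0.ne']; ring
  rw [hG]
  simp only [hy']
  rw [show y - 0 + 1 = y + 1 by ring]
  rw [← hyy2, ← hp2, ← hp1, ← hyy]
  field_simp
  ring

theorem stmt_5 (s : ℝ) (hs : s ∈ Set.Ioo (0:ℝ) 1) (hs2 : s ≠ 1/2) :
    -2 * (∫ y in (0:ℝ)..1, ∫ x in (0:ℝ)..1,
        (1 - x) * (1 - y) / (y - x + 1) ^ (1 + 2*s))
      = ((2:ℝ) ^ (1 - 2*s) + s - 2) / (s * (1 - s) * (3 - 2*s)) := by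
  obtain ⟨hs0, hs1⟩ := hs
  have h12 : 1 - 2*s ≠ 0 := by
    intro h; apply hs2; linarith [h]
  have h22 : 2 - 2*s ≠ 0 := by intro h; linarith [h]
  have h32 : 3 - 2*s ≠ 0 := by intro h; linarith [h]
  have hcongr : ∫ y in (0:ℝ)..1, (∫ x in (0:ℝ)..1,
        (1 - x) * (1 - y) / (y - x + 1) ^ (1 + 2*s))
      = ∫ y in (0:ℝ)..1,
        ((-1/s) * (y+1) ^ (-(2*s)) + (2/(1-2*s) + 3/(2*s)) * (y+1) ^ (1-2*s)
        + (-1/(1-2*s) - 1/(2*s)) * (y+1) ^ (2-2*s)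
        + (-1/(2*s*(1-2*s))) * y ^ (1-2*s) + (1/(2*s*(1-2*s))) * y ^ (2-2*s)) := by
    apply intervalIntegral.integral_congr_ae
    filter_upwards with y hy
    rw [Set.uIoc_of_le (by norm_num : (0:ℝ) ≤ 1)] at hy
    exact inner_eq s hs0 hs1 hs2 hy.1 hy.2
  rw [hcongr]
  -- integrability of the pieces
  have hc : ∀ c : ℝ, ContinuousOn (fun y : ℝ => (y+1) ^ c) (Set.uIcc (0:ℝ) 1) := by
    intro c
    apply ContinuousOn.rpow_const (by fun_prop)
    intro y hy
    rw [Set.uIcc_of_le (by norm_num)] at hy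
    exact Or.inl (by nlinarith [hy.1])
  have hI : ∀ c : ℝ, IntervalIntegrable (fun y : ℝ => (y+1) ^ c)
      MeasureTheory.volume 0 1 := fun c => (hc c).intervalIntegrable
  have hJ1 : IntervalIntegrable (fun y : ℝ => y ^ (1-2*s))
      MeasureTheory.volume 0 1 := intervalIntegral.intervalIntegrable_rpow' (by linarith)
  have hJ2 : IntervalIntegrable (fun y : ℝ => y ^ (2-2*s))
      MeasureTheory.volume 0 1 := intervalIntegral.intervalIntegrable_rpow' (by linarith)
  -- integral of (y+1)^c
  have hshift : ∀ c : ℝ, c ≠ -1 → ∫ y in (0:ℝ)..1, (y+1) ^ c = ((2:ℝ) ^ (c+1) - 1)/(c+1) := by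
    intro c hcne
    have := intervalIntegral.integral_comp_add_right (fun u : ℝ => u ^ c) 1 (a := 0) (b := 1)
    simp only [zero_add] at this
    rw [this]
    rw [integral_rpow (Or.inr ⟨hcne, by rw [Set.uIcc_of_le (by norm_num)]; simp⟩)]
    rw [Real.one_rpow]
    norm_num
  have hyint : ∀ r : ℝ, -1 < r → ∫ y in (0:ℝ)..1, y ^ r = 1/(r+1) := by
    intro r hr
    rw [integral_rpow (Or.inl hr)]
    rw [Real.one_rpow, Real.zero_rpow (by linarith), sub_zero]
  rw [intervalIntegral.integral_add (((((hI _).const_mul _).add ((hI _).const_mul _)).add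
        ((hI _).const_mul _)).add (hJ1.const_mul _)) (hJ2.const_mul _),
      intervalIntegral.integral_add ((((hI _).const_mul _).add ((hI _).const_mul _)).add
        ((hI _).const_mul _)) (hJ1.const_mul _),
      intervalIntegral.integral_add (((hI _).const_mul _).add ((hI _).const_mul _))
        ((hI _).const_mul _),
      intervalIntegral.integral_add ((hI _).const_mul _) ((hI _).const_mul _)]
  rw [intervalIntegral.integral_const_mul, intervalIntegral.integral_const_mul,
      intervalIntegral.integral_const_mul, intervalIntegral.integral_const_mul,
      intervalIntegral.integral_const_mul]
  rw [hshift (-(2*s)) (by intro h; apply h12; linarith [h]),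
      hshift (1-2*s) (by intro h; apply h22; linarith [h]),
      hshift (2-2*s) (by intro h; apply h32; linarith [h]),
      hyint (1-2*s) (by linarith), hyint (2-2*s) (by linarith)]
  have ht2 : (2:ℝ) ^ (1-2*s+1) = 2 ^ (1-2*s) * 2 := Real.rpow_add_one two_ne_zero _
  have ht3 : (2:ℝ) ^ (2-2*s+1) = 2 ^ (1-2*s) * 2 * 2 := by
    rw [show (2:ℝ)-2*s+1 = (1-2*s+1)+1 by ring, Real.rpow_add_one two_ne_zero, ht2]
  rw [show -(2*s)+1 = 1-2*s by ring, ht2, ht3]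
  have hs' : s ≠ 0 := hs0.ne'
  have h1s : 1 - s ≠ 0 := by intro h; linarith [h]
  have h2s : (2:ℝ)*s ≠ 0 := by positivity
  rw [show (1:ℝ)-2*s+1 = 2-2*s by ring, show (2:ℝ)-2*s+1 = 3-2*s by ring]
  field_simp
  ring
end

section
/- For s ∈ (0,1), s ≠ 1/2, the double integral -2∫_0^1 ∫_{-1}^0 (1+x)(1-y)/(y-x+1)^{1+2s} dx dy equals (13 - 5·2^{3-2s} + 3^{3-2s} + s(2^{4-2s} - 14) + 4s^2)/(2s(1-2s)(1-s)(3-2s)). -/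
/-!
Substituting `u = y - x + 1`, the inner integral becomes `(1 - y) ∫_{y+1}^{y+2} (y + 2 - u) u^{-1-2s} du`;
once it is evaluated, the outer integrand is a linear combination of `(1 - y)(y + 1)^{-2s}`,
`(1 - y)(y + 1)^{1-2s}` and `(1 - y)(y + 2)^{1-2s}`. Every integral met is thus of the elementary
form `∫ (c - v) v^q dv`, and the rest is algebra with `a^{n-2s} = a^n / a^{2s}`.
-/

open Real Set intervalIntegral
open scoped Interval

theorem integral_sub_mul_rpow {α β c q : ℝ} (h0 : (0:ℝ) ∉ [[α, β]]) (hq1 : q ≠ -1)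
    (hq2 : q ≠ -2) :
    ∫ v in α..β, (c - v) * v ^ q
      = c * (β ^ (q + 1) - α ^ (q + 1)) / (q + 1) - (β ^ (q + 2) - α ^ (q + 2)) / (q + 2) := by
  have hpt : EqOn (fun v => (c - v) * v ^ q) (fun v => c * v ^ q - v ^ (q + 1)) [[α, β]] :=
    fun v hv => by
      dsimp only
      rw [rpow_add_one (ne_of_mem_of_not_mem hv h0)]
      ring
  have hq1' : q + 1 ≠ -1 := fun h => hq2 (by linarith)
  rw [integral_congr hpt, integral_sub ((intervalIntegrable_rpow (Or.inr h0)).const_mul c)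
    (intervalIntegrable_rpow (Or.inr h0)), integral_const_mul, integral_rpow (Or.inr ⟨hq1, h0⟩),
    integral_rpow (Or.inr ⟨hq1', h0⟩), add_assoc, one_add_one_eq_two, mul_div_assoc]

theorem intervalIntegrable_one_sub_mul_add_rpow {k q : ℝ} (hk : 0 < k) :
    IntervalIntegrable (fun y => (1 - y) * (y + k) ^ q) MeasureTheory.volume 0 1 := by
  refine ContinuousOn.intervalIntegrable ((continuousOn_const.sub continuousOn_id).mul
    ((continuousOn_id.add continuousOn_const).rpow_const fun y hy => Or.inl ?_))
  rw [uIcc_of_le zero_le_one] at hy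
  exact (add_pos_of_nonneg_of_pos hy.1 hk).ne'

theorem integral_one_sub_mul_add_rpow {k q : ℝ} (hk : 0 < k) (hq1 : q ≠ -1) (hq2 : q ≠ -2) :
    ∫ y in (0:ℝ)..1, (1 - y) * (y + k) ^ q
      = (k + 1) * ((k + 1) ^ (q + 1) - k ^ (q + 1)) / (q + 1)
        - ((k + 1) ^ (q + 2) - k ^ (q + 2)) / (q + 2) := by
  have h0 : (0:ℝ) ∉ [[k, k + 1]] := by
    rw [uIcc_of_le (by linarith)]
    exact fun h => hk.not_ge h.1
  calc ∫ y in (0:ℝ)..1, (1 - y) * (y + k) ^ q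
      = ∫ y in (0:ℝ)..1, (k + 1 - (y + k)) * (y + k) ^ q := by
        congr! 2 with y
        ring
    _ = ∫ v in 0 + k..1 + k, (k + 1 - v) * v ^ q :=
        integral_comp_add_right (fun v => (k + 1 - v) * v ^ q) k
    _ = _ := by rw [zero_add, add_comm 1 k, integral_sub_mul_rpow h0 hq1 hq2]

theorem integral_one_add_mul_one_sub_div_rpow {y a : ℝ} (hy : -1 < y) (ha0 : a ≠ 0)
    (ha1 : a ≠ 1) :
    ∫ x in (-1:ℝ)..0, (1 + x) * (1 - y) / (y - x + 1) ^ (1 + a)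
      = (1 - y) * ((y + 1) ^ (-a) / a
          + ((y + 1) ^ (1 - a) - (y + 2) ^ (1 - a)) / (a * (1 - a))) := by
  have h1 : 0 < y + 1 := by linarith
  have h2 : 0 < y + 2 := by linarith
  have h0 : (0:ℝ) ∉ [[y + 1, y + 2]] := by
    rw [uIcc_of_le (by linarith)]
    exact fun h => h1.not_ge h.1
  have hpt : EqOn (fun x => (1 + x) * (1 - y) / (y - x + 1) ^ (1 + a))
      (fun x => (1 - y) * ((y + 2 - (y + 1 - x)) * (y + 1 - x) ^ (-(1 + a)))) [[-1, 0]] :=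
    fun x hx => by
      rw [uIcc_of_le (by norm_num)] at hx
      dsimp only
      rw [rpow_neg (by linarith [hx.2]), show y - x + 1 = y + 1 - x by ring]
      ring
  have hq1 : -(1 + a) ≠ -1 := fun h => ha0 (by linarith)
  have hq2 : -(1 + a) ≠ -2 := fun h => ha1 (by linarith)
  have ha1' : -a + 1 ≠ 0 := fun h => ha1 (by linarith)
  rw [integral_congr hpt, integral_const_mul]
  calc (1 - y) * ∫ x in (-1:ℝ)..0, (y + 2 - (y + 1 - x)) * (y + 1 - x) ^ (-(1 + a))
      = (1 - y) * ∫ u in y + 1 - 0..y + 1 - -1, (y + 2 - u) * u ^ (-(1 + a)) := by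
        rw [integral_comp_sub_left (fun u => (y + 2 - u) * u ^ (-(1 + a))) (y + 1)]
    _ = _ := by
      rw [sub_zero, sub_neg_eq_add, add_assoc, one_add_one_eq_two,
        integral_sub_mul_rpow h0 hq1 hq2, show -(1 + a) + 1 = -a by ring,
        show -(1 + a) + 2 = -a + 1 by ring, show 1 - a = -a + 1 by ring,
        rpow_add_one h1.ne', rpow_add_one h2.ne']
      field_simp
      ring

theorem stmt_6 (s : ℝ) (hs : s ∈ Set.Ioo (0:ℝ) 1) (hs2 : s ≠ 1/2) :
    -2 * (∫ y in (0:ℝ)..1, ∫ x in (-1:ℝ)..0,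
        (1 + x) * (1 - y) / (y - x + 1) ^ (1 + 2*s))
      = (13 - 5 * (2:ℝ) ^ (3 - 2*s) + (3:ℝ) ^ (3 - 2*s)
          + s * ((2:ℝ) ^ (4 - 2*s) - 14) + 4*s^2)
        / (2*s*(1 - 2*s)*(1 - s)*(3 - 2*s)) := by
  obtain ⟨hs0, hs1⟩ := hs
  have ha0 : 2 * s ≠ 0 := by positivity
  have ha1 : 2 * s ≠ 1 := fun h => hs2 (by linarith)
  have hinner : EqOn
      (fun y => ∫ x in (-1:ℝ)..0, (1 + x) * (1 - y) / (y - x + 1) ^ (1 + 2 * s))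
      (fun y => (2 * s)⁻¹ * ((1 - y) * (y + 1) ^ (-(2 * s)))
        + (2 * s * (1 - 2 * s))⁻¹ * ((1 - y) * (y + 1) ^ (1 - 2 * s)
          - (1 - y) * (y + 2) ^ (1 - 2 * s))) [[0, 1]] := fun y hy => by
    rw [uIcc_of_le zero_le_one] at hy
    dsimp only
    rw [integral_one_add_mul_one_sub_div_rpow (by linarith [hy.1]) ha0 ha1]
    ring
  have hI := intervalIntegrable_one_sub_mul_add_rpow (q := -(2 * s)) one_pos
  have hJ := intervalIntegrable_one_sub_mul_add_rpow (q := 1 - 2 * s) one_pos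
  have hK := intervalIntegrable_one_sub_mul_add_rpow (q := 1 - 2 * s) two_pos
  rw [integral_congr hinner, integral_add (hI.const_mul _) ((hJ.sub hK).const_mul _),
    integral_const_mul, integral_const_mul, integral_sub hJ hK,
    integral_one_sub_mul_add_rpow one_pos (fun h => ha1 (by linarith)) (by intro h; linarith),
    integral_one_sub_mul_add_rpow one_pos (by intro h; linarith) (by intro h; linarith),
    integral_one_sub_mul_add_rpow two_pos (by intro h; linarith) (by intro h; linarith),
    show -(2 * s) + 1 = 1 - 2 * s by ring, show -(2 * s) + 2 = 2 - 2 * s by ring,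
    show 1 - 2 * s + 1 = 2 - 2 * s by ring, show 1 - 2 * s + 2 = 3 - 2 * s by ring]
  have h1 : 1 - 2 * s ≠ 0 := sub_ne_zero.2 ha1.symm
  have h2 : 2 - 2 * s ≠ 0 := by intro h; linarith
  have h3 : 3 - 2 * s ≠ 0 := by intro h; linarith
  have h4 : 1 - s ≠ 0 := by intro h; linarith
  norm_num [rpow_sub, rpow_neg]
  field_simp
  ring
end

section
/- The double integral -2∫_0^1 ∫_{-1}^0 (1+x)(1-y)/(y-x+1)^{2} dx dy equals 1 + 9 ln 3 - 16 ln 2. -/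
/-! With `c = y + 1`, the inner integrand is `(1 - y)` times `(1 + x) / (c - x) ^ 2
= (c + 1) / (c - x) ^ 2 - 1 / (c - x)`, which has an elementary primitive; the resulting
function of `y` is a polynomial times logarithms plus a rational function, and is integrated
by an explicit primitive as well. -/

open Real

lemma hasDerivAt_add_one_div_sub_add_log_sub {c x : ℝ} (hx : c - x ≠ 0) :
    HasDerivAt (fun x => (c + 1) / (c - x) + log (c - x)) ((1 + x) / (c - x) ^ 2) x := by
  have hsub : HasDerivAt (fun x : ℝ => c - x) (-1) x := by
    simpa using (hasDerivAt_id x).const_sub c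
  refine ((hasDerivAt_const x (c + 1)).div hsub hx).add (hsub.log hx) |>.congr_deriv ?_
  field_simp
  ring

lemma integral_one_add_div_sub_sq {c : ℝ} (hc : 0 < c) :
    ∫ x in (-1:ℝ)..0, (1 + x) / (c - x) ^ 2 = 1 / c + log c - log (c + 1) := by
  have hpos : ∀ x ∈ Set.uIcc (-1:ℝ) 0, 0 < c - x := fun x hx => by
    rw [Set.uIcc_of_le (by norm_num)] at hx
    linarith [hx.2]
  rw [intervalIntegral.integral_eq_sub_of_hasDerivAt
    (fun x hx => hasDerivAt_add_one_div_sub_add_log_sub (hpos x hx).ne')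
    (ContinuousOn.intervalIntegrable <|
      ContinuousOn.div (by fun_prop) (by fun_prop)
        fun x hx => pow_ne_zero _ (hpos x hx).ne')]
  have hc1 : c + 1 ≠ 0 := by linarith
  simp only [sub_zero, sub_neg_eq_add]
  field_simp
  ring

/-- The polynomial factors are primitives of `1 - y`, with constants chosen so that the
rational terms produced by differentiating the logarithms add up to `(1 - y) / (y + 1)`. -/
lemma hasDerivAt_outer_primitive {y : ℝ} (h1 : y + 1 ≠ 0) (h2 : y + 2 ≠ 0) :
    HasDerivAt
      (fun y => (7/2 + y - y ^ 2 / 2) * log (y + 1) - (4 + y - y ^ 2 / 2) * log (y + 2) - y / 2)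
      ((1 - y) * (1 / (y + 1) + log (y + 1) - log (y + 2))) y := by
  have hpoly (a : ℝ) : HasDerivAt (fun y : ℝ => a + y - y ^ 2 / 2) (1 - y) y := by
    refine ((hasDerivAt_id y).const_add a).sub ((hasDerivAt_pow 2 y).div_const 2)
      |>.congr_deriv ?_
    simp
  have hlog (a : ℝ) (ha : y + a ≠ 0) : HasDerivAt (fun y : ℝ => log (y + a)) (1 / (y + a)) y := by
    simpa using ((hasDerivAt_id y).add_const a).log ha
  refine ((hpoly _).mul (hlog 1 h1)).sub ((hpoly _).mul (hlog 2 h2))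
    |>.sub ((hasDerivAt_id y).div_const 2) |>.congr_deriv ?_
  field_simp
  ring

lemma integral_outer :
    ∫ y in (0:ℝ)..1, (1 - y) * (1 / (y + 1) + log (y + 1) - log (y + 2))
      = 8 * log 2 - 9 / 2 * log 3 - 1 / 2 := by
  have hpos : ∀ y ∈ Set.uIcc (0:ℝ) 1, 0 < y + 1 := fun y hy => by
    rw [Set.uIcc_of_le (by norm_num)] at hy
    linarith [hy.1]
  have hne1 y (hy : y ∈ Set.uIcc (0:ℝ) 1) : y + 1 ≠ 0 := (hpos y hy).ne'
  have hne2 y (hy : y ∈ Set.uIcc (0:ℝ) 1) : y + 2 ≠ 0 := by linarith [hpos y hy]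
  rw [intervalIntegral.integral_eq_sub_of_hasDerivAt
    (fun y hy => hasDerivAt_outer_primitive (hne1 y hy) (hne2 y hy))
    (ContinuousOn.intervalIntegrable <|
      continuousOn_const.sub continuousOn_id |>.mul <|
        ((continuousOn_const.div (by fun_prop) hne1).add (ContinuousOn.log (by fun_prop) hne1)).sub
          (ContinuousOn.log (by fun_prop) hne2))]
  norm_num
  ring

theorem stmt_7 :
    -2 * (∫ y in (0:ℝ)..1, ∫ x in (-1:ℝ)..0,
        (1 + x) * (1 - y) / (y - x + 1) ^ (2:ℕ))
      = 1 + 9 * Real.log 3 - 16 * Real.log 2 := by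
  have inner : ∀ y ∈ Set.uIcc (0:ℝ) 1, (∫ x in (-1:ℝ)..0, (1 + x) * (1 - y) / (y - x + 1) ^ 2)
      = (1 - y) * (1 / (y + 1) + log (y + 1) - log (y + 2)) := fun y hy => by
    rw [Set.uIcc_of_le (by norm_num)] at hy
    have hrw : ∀ x : ℝ, (1 + x) * (1 - y) / (y - x + 1) ^ 2
        = (1 - y) * ((1 + x) / (y + 1 - x) ^ 2) := fun x => by ring
    simp_rw [hrw, intervalIntegral.integral_const_mul,
      integral_one_add_div_sub_sq (by linarith [hy.1] : 0 < y + 1)]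
    ring_nf
  rw [intervalIntegral.integral_congr inner, integral_outer]
  ring
end

section
/- For s ∈ (0,1), s ≠ 1/2, the double integral ∫_{-1}^0 ∫_0^1 (x+y)^2/(x-y)^{1+2s} dy dx, where the inner variable y ranges over (0,1) and the outer x over (-1,0) and the denominator is |x-y|^{1+2s} = (y-x)^{1+2s}, equals (2s^2 - 5s + 4 - 2^{2-2s})/(s(1-2s)(1-s)(3-2s)). -/
/-!
Expanding `(x + y) ^ 2 = (y - x) ^ 2 + 4 x (y - x) + 4 x ^ 2` turns the integrand into three powers
of `y - x`, which integrate in `y` for every `x < 0`. The resulting `x (1 - x) ^ q` and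
`x (-x) ^ q` terms are rewritten as differences of pure powers of `1 - x` and `-x`, which then
integrate in `x`. The computation works for any exponent `r < 4` (integrability at the corner
`x = y = 0`) in place of `1 + 2 s`, except `r = 1, 2, 3`, where one of the antiderivatives
`(y - x) ^ (k - r) / (k - r)` would be logarithmic.
-/

open Real Set MeasureTheory intervalIntegral
open scoped Interval

theorem integral_sub_const_rpow {a b c p : ℝ} (h : -1 < p ∨ p ≠ -1 ∧ c ∉ [[a, b]]) :
    ∫ y in a..b, (y - c) ^ p = ((b - c) ^ (p + 1) - (a - c) ^ (p + 1)) / (p + 1) := by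
  rw [integral_comp_sub_right (· ^ p), integral_rpow]
  refine h.imp_right (And.imp_right fun hc h0 => hc ?_)
  simp only [mem_uIcc, sub_nonneg, sub_nonpos] at h0 ⊢
  exact h0

theorem integral_const_sub_rpow {a b c p : ℝ} (h : -1 < p ∨ p ≠ -1 ∧ c ∉ [[a, b]]) :
    ∫ y in a..b, (c - y) ^ p = ((c - a) ^ (p + 1) - (c - b) ^ (p + 1)) / (p + 1) := by
  rw [integral_comp_sub_left (· ^ p), integral_rpow]
  refine h.imp_right (And.imp_right fun hc h0 => hc ?_)
  simp only [mem_uIcc, sub_nonneg, sub_nonpos] at h0 ⊢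
  tauto

theorem intervalIntegrable_sub_const_rpow {a b c p : ℝ} (h : -1 < p ∨ c ∉ [[a, b]]) :
    IntervalIntegrable (fun y => (y - c) ^ p) volume a b := by
  rcases h with hp | hc
  · simpa using (intervalIntegrable_rpow' (a := a - c) (b := b - c) hp).comp_sub_right c
  · exact ((continuousOn_id.sub continuousOn_const).rpow_const fun y hy =>
      Or.inl (sub_ne_zero.2 (ne_of_mem_of_not_mem hy hc))).intervalIntegrable

theorem intervalIntegrable_const_sub_rpow {a b c p : ℝ} (h : -1 < p ∨ c ∉ [[a, b]]) :
    IntervalIntegrable (fun y => (c - y) ^ p) volume a b := by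
  rcases h with hp | hc
  · simpa using (intervalIntegrable_rpow' (a := c - a) (b := c - b) hp).comp_sub_left c
  · exact ((continuousOn_const.sub continuousOn_id).rpow_const fun y hy =>
      Or.inl (sub_ne_zero.2 (ne_of_mem_of_not_mem hy hc).symm)).intervalIntegrable

theorem sq_add_div_rpow {x y r : ℝ} (h : 0 < y - x) :
    (x + y) ^ 2 / (y - x) ^ r
      = (y - x) ^ (2 - r) + 4 * x * (y - x) ^ (1 - r) + 4 * x ^ 2 * (y - x) ^ (-r) := by
  have hr : (y - x) ^ r ≠ 0 := (rpow_pos_of_pos h r).ne'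
  rw [rpow_sub h, rpow_sub h, rpow_neg h.le, rpow_two, rpow_one]
  field_simp
  ring

theorem mul_sub_rpow {c x q : ℝ} (h : 0 < c - x) :
    x * (c - x) ^ q = c * (c - x) ^ q - (c - x) ^ (q + 1) := by
  rw [rpow_add_one h.ne']
  ring

theorem integral_sq_add_div_sub_rpow {x r : ℝ} (hx : x < 0) (h1 : r ≠ 1) (h2 : r ≠ 2)
    (h3 : r ≠ 3) :
    ∫ y in (0 : ℝ)..1, (x + y) ^ 2 / (y - x) ^ r
      = (1 / (3 - r) - 4 / (2 - r) + 4 / (1 - r)) * ((1 - x) ^ (3 - r) - (-x) ^ (3 - r))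
        + (4 / (2 - r) - 8 / (1 - r)) * (1 - x) ^ (2 - r) + 4 / (1 - r) * (1 - x) ^ (1 - r) := by
  have hx01 : x ∉ [[(0 : ℝ), 1]] := fun h => hx.not_ge (by simpa using h.1)
  have hint : ∀ p : ℝ, IntervalIntegrable (fun y => (y - x) ^ p) volume 0 1 :=
    fun p => intervalIntegrable_sub_const_rpow (Or.inr hx01)
  have hsplit : EqOn (fun y => (x + y) ^ 2 / (y - x) ^ r)
      (fun y => (y - x) ^ (2 - r) + 4 * x * (y - x) ^ (1 - r) + 4 * x ^ 2 * (y - x) ^ (-r))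
      [[0, 1]] := fun y hy => sq_add_div_rpow (by simp at hy; linarith [hy.1])
  have hP2 := mul_sub_rpow (c := 1) (x := x) (q := 2 - r) (by linarith)
  have hP1 := mul_sub_rpow (c := 1) (x := x) (q := 1 - r) (by linarith)
  have hN2 := mul_sub_rpow (c := 0) (x := x) (q := 2 - r) (by linarith)
  have hN1 := mul_sub_rpow (c := 0) (x := x) (q := 1 - r) (by linarith)
  rw [integral_congr hsplit, integral_add ((hint _).add ((hint _).const_mul _))
      ((hint _).const_mul _), integral_add (hint _) ((hint _).const_mul _),
    intervalIntegral.integral_const_mul, intervalIntegral.integral_const_mul,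
    integral_sub_const_rpow (Or.inr ⟨by contrapose! h3; linarith, hx01⟩),
    integral_sub_const_rpow (Or.inr ⟨by contrapose! h2; linarith, hx01⟩),
    integral_sub_const_rpow (Or.inr ⟨by contrapose! h1; linarith, hx01⟩)]
  simp only [show 2 - r + 1 = 3 - r by ring, show 1 - r + 1 = 2 - r by ring,
    show -r + 1 = 1 - r by ring, zero_sub] at hP2 hP1 hN2 hN1 ⊢
  linear_combination (4 / (2 - r) - 4 / (1 - r)) * hP2 + (4 * x / (1 - r) + 4 / (1 - r)) * hP1
    + (-4 / (2 - r) + 4 / (1 - r)) * hN2 - 4 * x / (1 - r) * hN1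

theorem integral_integral_sq_add_div_sub_rpow {r : ℝ} (h1 : r ≠ 1) (h2 : r ≠ 2) (h3 : r ≠ 3)
    (h4 : r < 4) :
    ∫ x in (-1 : ℝ)..0, ∫ y in (0 : ℝ)..1, (x + y) ^ 2 / (y - x) ^ r
      = (1 / (3 - r) - 4 / (2 - r) + 4 / (1 - r)) * ((2 ^ (4 - r) - 2) / (4 - r))
        + (4 / (2 - r) - 8 / (1 - r)) * ((2 ^ (3 - r) - 1) / (3 - r))
        + 4 / (1 - r) * ((2 ^ (2 - r) - 1) / (2 - r)) := by
  have h1mem : (1 : ℝ) ∉ [[(-1 : ℝ), 0]] := by simp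
  have hint : ∀ p : ℝ, IntervalIntegrable (fun x => (1 - x) ^ p) volume (-1) 0 :=
    fun p => intervalIntegrable_const_sub_rpow (Or.inr h1mem)
  have hint0 : IntervalIntegrable (fun x => (-x) ^ (3 - r)) volume (-1) 0 := by
    simpa using intervalIntegrable_const_sub_rpow (a := -1) (b := 0) (c := 0) (p := 3 - r)
      (Or.inl (by linarith))
  have hN : ∫ x in (-1 : ℝ)..0, (-x) ^ (3 - r) = 1 / (4 - r) := by
    rw [integral_comp_neg (fun x => x ^ (3 - r)), integral_rpow (Or.inl (by linarith)),
      neg_zero, neg_neg, show 3 - r + 1 = 4 - r by ring, one_rpow, zero_rpow (by linarith),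
      sub_zero]
  -- the inner integral is only computed for `x < 0`; the endpoint `x = 0` is a null set
  rw [integral_congr_Ioo_of_le (by norm_num)
    fun x hx => integral_sq_add_div_sub_rpow hx.2 h1 h2 h3]
  rw [integral_add (((hint _).sub hint0).const_mul _ |>.add ((hint _).const_mul _))
      ((hint _).const_mul _),
    integral_add (((hint _).sub hint0).const_mul _) ((hint _).const_mul _),
    intervalIntegral.integral_const_mul, intervalIntegral.integral_const_mul,
    intervalIntegral.integral_const_mul, integral_sub (hint _) hint0, hN,
    integral_const_sub_rpow (Or.inr ⟨by contrapose! h4; linarith, h1mem⟩),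
    integral_const_sub_rpow (Or.inr ⟨by contrapose! h3; linarith, h1mem⟩),
    integral_const_sub_rpow (Or.inr ⟨by contrapose! h2; linarith, h1mem⟩)]
  rw [show (1 : ℝ) - -1 = 2 by norm_num, sub_zero, one_rpow, one_rpow, one_rpow,
    show 3 - r + 1 = 4 - r by ring, show 2 - r + 1 = 3 - r by ring,
    show 1 - r + 1 = 2 - r by ring]
  ring

theorem stmt_11 (s : ℝ) (hs : s ∈ Set.Ioo (0:ℝ) 1) (hs2 : s ≠ 1/2) :
    (∫ x in (-1:ℝ)..0, ∫ y in (0:ℝ)..1, (x + y)^2 / (y - x) ^ (1 + 2*s))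
      = (2*s^2 - 5*s + 4 - (2:ℝ) ^ (2 - 2*s))
        / (s*(1 - 2*s)*(1 - s)*(3 - 2*s)) := by
  obtain ⟨hs0, hs1⟩ := hs
  have h12 : 1 - 2 * s ≠ 0 := fun h => hs2 (by linarith)
  have h4 : (2 : ℝ) ^ (4 - (1 + 2 * s)) = 2 * 2 ^ (2 - 2 * s) := by
    rw [show 4 - (1 + 2 * s) = 1 + (2 - 2 * s) by ring, rpow_add two_pos, rpow_one]
  have h3 : (2 : ℝ) ^ (3 - (1 + 2 * s)) = 2 ^ (2 - 2 * s) := by ring_nf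
  have h2 : (2 : ℝ) ^ (2 - (1 + 2 * s)) = 2 ^ (2 - 2 * s) / 2 := by
    rw [show 2 - (1 + 2 * s) = 2 - 2 * s - 1 by ring, rpow_sub_one two_ne_zero]
  rw [integral_integral_sq_add_div_sub_rpow (by linarith) (fun h => hs2 (by linarith))
      (by linarith) (by linarith), h4, h3, h2]
  field_simp [show 4 - (1 + 2 * s) ≠ 0 by linarith, show 3 - (1 + 2 * s) ≠ 0 by linarith,
    show 2 - (1 + 2 * s) ≠ 0 by contrapose! h12; linarith, show 1 - (1 + 2 * s) ≠ 0 by linarith,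
    show 1 - s ≠ 0 by linarith, show 3 - 2 * s ≠ 0 by linarith]
  ring
end

section
/- The double integral ∫_{-1}^0 ∫_0^1 (x+y)^2/(y-x)^{2} dy dx equals 3 - 4 ln 2. -/
/-!
Since `(x + y)² = (y - x)² + 4x(y - x) + 4x²`, the inner integral is elementary: for `x < 0` it
equals `5 + 4x log(1 - x) - 4x log(-x) - 4/(1 - x)`. Writing `-x log(-x)` as `negMulLog (-x)`
shows that this is continuous up to `x = 0`, and it has the explicit antiderivative
`3x + 2(x² + 1) log(1 - x) - 2x² log(-x)`, whose values at `0` and `-1` give `3 - 4 log 2`.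
-/

open Real Set MeasureTheory intervalIntegral

theorem integral_sq_add_div_sq_sub {x a b : ℝ} (ha : x < a) (hb : x < b) :
    ∫ y in a..b, (x + y) ^ 2 / (y - x) ^ 2
      = b - a + 4 * x * (log (b - x) - log (a - x)) + 4 * x ^ 2 * ((a - x)⁻¹ - (b - x)⁻¹) := by
  have hpos : ∀ y ∈ uIcc a b, y - x ≠ 0 := fun y hy => by
    have : x < y := lt_of_lt_of_le (lt_min ha hb) hy.1
    linarith
  have hderiv : ∀ y ∈ uIcc a b,
      HasDerivAt (fun y => y + 4 * x * log (y - x) - 4 * x ^ 2 * (y - x)⁻¹)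
        ((x + y) ^ 2 / (y - x) ^ 2) y := by
    intro y hy
    have hshift := (hasDerivAt_id' y).sub_const x
    refine (((hasDerivAt_id' y).add ((hshift.log (hpos y hy)).const_mul (4 * x))).sub
      ((hshift.inv (hpos y hy)).const_mul (4 * x ^ 2))).congr_deriv ?_
    field_simp [hpos y hy]
    ring
  have hint : IntervalIntegrable (fun y => (x + y) ^ 2 / (y - x) ^ 2) volume a b :=
    ContinuousOn.intervalIntegrable fun y hy => by
      have := pow_ne_zero 2 (hpos y hy)
      exact ContinuousAt.continuousWithinAt (by fun_prop (disch := assumption))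
  rw [integral_eq_sub_of_hasDerivAt hderiv hint]
  ring

noncomputable def innerIntegral (x : ℝ) : ℝ :=
  5 + 4 * x * log (1 - x) - 4 * negMulLog (-x) - 4 / (1 - x)

noncomputable def innerIntegralAntideriv (x : ℝ) : ℝ :=
  3 * x + 2 * (x ^ 2 + 1) * log (1 - x) - 2 * x * negMulLog (-x)

theorem integral_sq_add_div_sq_sub_zero_one {x : ℝ} (hx : x < 0) :
    ∫ y in (0 : ℝ)..1, (x + y) ^ 2 / (y - x) ^ 2 = innerIntegral x := by
  have h1x : 1 - x ≠ 0 := by linarith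
  have hx0 : x ≠ 0 := hx.ne
  rw [integral_sq_add_div_sq_sub (by linarith) (by linarith), zero_sub, innerIntegral,
    negMulLog]
  field_simp
  ring

theorem continuousOn_innerIntegral : ContinuousOn innerIntegral (Iio 1) :=
  continuousOn_of_forall_continuousAt fun x hx => by
    have : 1 - x ≠ 0 := (sub_pos.2 hx).ne'
    unfold innerIntegral
    fun_prop (disch := assumption)

theorem continuousOn_innerIntegralAntideriv : ContinuousOn innerIntegralAntideriv (Iio 1) :=
  continuousOn_of_forall_continuousAt fun x hx => by
    have : 1 - x ≠ 0 := (sub_pos.2 hx).ne'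
    unfold innerIntegralAntideriv
    fun_prop (disch := assumption)

theorem hasDerivAt_innerIntegralAntideriv {x : ℝ} (hx : x < 0) :
    HasDerivAt innerIntegralAntideriv (innerIntegral x) x := by
  have h1x : 1 - x ≠ 0 := by linarith
  have hlog := ((hasDerivAt_id' x).const_sub 1).log h1x
  have hnml := (hasDerivAt_negMulLog (neg_ne_zero.2 hx.ne)).comp x (hasDerivAt_neg' x)
  refine ((((hasDerivAt_id' x).const_mul 3).add
      ((((hasDerivAt_pow 2 x).add_const 1).const_mul 2).mul hlog)).sub
    (((hasDerivAt_id' x).const_mul 2).mul hnml)).congr_deriv ?_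
  simp only [innerIntegral, Function.comp_apply, negMulLog]
  field_simp
  ring

theorem stmt_12 :
    (∫ x in (-1:ℝ)..0, ∫ y in (0:ℝ)..1, (x + y)^2 / (y - x) ^ (2:ℕ))
      = 3 - 4 * Real.log 2 := by
  have hIcc : Icc (-1 : ℝ) 0 ⊆ Iio 1 := fun x hx => show x < 1 by linarith [hx.2]
  calc (∫ x in (-1:ℝ)..0, ∫ y in (0:ℝ)..1, (x + y) ^ 2 / (y - x) ^ 2)
      = ∫ x in (-1:ℝ)..0, innerIntegral x :=
        integral_congr_Ioo_of_le (by norm_num) fun x hx =>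
          integral_sq_add_div_sq_sub_zero_one hx.2
    _ = innerIntegralAntideriv 0 - innerIntegralAntideriv (-1) :=
        integral_eq_sub_of_hasDerivAt_of_le (by norm_num)
          (continuousOn_innerIntegralAntideriv.mono hIcc)
          (fun x hx => hasDerivAt_innerIntegralAntideriv hx.2)
          ((continuousOn_innerIntegral.mono hIcc).intervalIntegrable_of_Icc (by norm_num))
    _ = 3 - 4 * log 2 := by
        norm_num [innerIntegralAntideriv]
        ring
end
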